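/- Let θ ≥ θ* and L = L_12(θ). Then L > L_d(θ), the number θ̃ = θ − α^2/L^2 satisfies 2θ/5 < θ̃ < θ and f′(θ̃) = 0, and therefore X_m(θ, L) = θ̃. -/

import Mathlib

/-!
Squaring the defining formula of `L = L₁₂(θ)` shows that `L²` is the larger root of
`L⁴ - 4α³θL² + 4α⁵ = 0`, i.e. `L² = 4α³θ̃`. As `θ - θ̃ = α²/L²`, this is precisely the squared
critical-point equation `16L²X²(θ - X)³ = 1` at `X = θ̃`. The bound `L² ≥ 2α³θ` gives
`θ̃ ≥ θ/2 > 2θ/5`, and together with `αθ² ≥ 25/16` (that is, `θ ≥ θ*`) also `L > L_d(θ)`.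
Uniqueness holds because `X ↦ X²(θ - X)³` is strictly decreasing on `[2θ/5, θ]`.
-/

open Real Set

/-- The auxiliary energy `f(X) = (θ - X)^(-1/2) - L·X²` for `0 < X < θ`, with `f(0) = 0`. -/
noncomputable def f (θ L X : ℝ) : ℝ :=
  if X = 0 then 0 else (θ - X) ^ (-(1:ℝ)/2) - L * X ^ 2

/-- `L_d(θ) = (25/24)·√(5/3)·θ^(-5/2)`. -/
noncomputable def Ld (θ : ℝ) : ℝ := (25/24) * Real.sqrt (5/3) * θ ^ (-(5:ℝ)/2)

/-- `θ* = (5/4)·α^(-1/2)`. -/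
noncomputable def θstar (α : ℝ) : ℝ := (5/4) * α ^ (-(1:ℝ)/2)

/-- `L_01(θ) = (5^(5/2)/16)·θ^(-5/2)`. -/
noncomputable def L01 (θ : ℝ) : ℝ := ((5:ℝ) ^ ((5:ℝ)/2) / 16) * θ ^ (-(5:ℝ)/2)

/-- `L_02(θ) = α^(5/4)·(√α·θ - 1)^(-1/2)`. -/
noncomputable def L02 (α θ : ℝ) : ℝ := α ^ ((5:ℝ)/4) * (Real.sqrt α * θ - 1) ^ (-(1:ℝ)/2)

/-- `L_12(θ) = (2α³θ + 2α²√(α(αθ² - 1)))^(1/2)`. -/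
noncomputable def L12 (α θ : ℝ) : ℝ :=
  Real.sqrt (2*α^3*θ + 2*α^2 * Real.sqrt (α*(α*θ^2 - 1)))

lemma θstar_eq {α : ℝ} (hα : 0 ≤ α) : θstar α = 5/4 * (√α)⁻¹ := by
  rw [θstar, neg_div, Real.rpow_neg hα, ← Real.sqrt_eq_rpow]

lemma pos_and_le_mul_sq_of_θstar_le {α θ : ℝ} (hα : 0 < α) (hθ : θstar α ≤ θ) :
    0 < θ ∧ 25/16 ≤ α * θ^2 := by
  rw [θstar_eq hα.le] at hθ
  have hsα : 0 < √α := Real.sqrt_pos.2 hα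
  have hθpos : 0 < θ := lt_of_lt_of_le (by positivity) hθ
  have h : 5/4 ≤ √α * θ := by
    rwa [← div_eq_mul_inv, div_le_iff₀ hsα, mul_comm] at hθ
  refine ⟨hθpos, ?_⟩
  calc 25/16 = (5/4 : ℝ)^2 := by norm_num
    _ ≤ (√α * θ)^2 := pow_le_pow_left₀ (by norm_num) h 2
    _ = α * θ^2 := by rw [mul_pow, Real.sq_sqrt hα.le]

section L12

variable {α θ : ℝ}

lemma L12_sq (hα : 0 ≤ α) (hθ : 0 ≤ θ) :
    L12 α θ ^ 2 = 2*α^3*θ + 2*α^2 * √(α*(α*θ^2 - 1)) :=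
  Real.sq_sqrt (by positivity)

lemma L12_pos (hα : 0 < α) (hθ : 0 < θ) : 0 < L12 α θ :=
  Real.sqrt_pos.2 (by positivity)

lemma two_mul_cube_mul_le_L12_sq (hα : 0 ≤ α) (hθ : 0 ≤ θ) :
    2*α^3*θ ≤ L12 α θ ^ 2 := by
  rw [L12_sq hα hθ]
  have : 0 ≤ 2*α^2 * √(α*(α*θ^2 - 1)) := by positivity
  linarith

lemma L12_sq_eq (hα : 0 < α) (hθ : 0 < θ) (hαθ : 1 ≤ α * θ^2) :
    L12 α θ ^ 2 = 4*α^3 * (θ - α^2 / L12 α θ ^ 2) := by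
  set s := √(α*(α*θ^2 - 1))
  have hs : s^2 = α*(α*θ^2 - 1) := Real.sq_sqrt (by nlinarith)
  have hL2 := L12_sq hα.le hθ.le
  have hL0 := (L12_pos hα hθ).ne'
  field_simp
  linear_combination (L12 α θ ^ 2 - 2*α^3*θ + 2*α^2*s) * hL2 + 4*α^4 * hs

lemma Ld_sq (hθ : 0 < θ) : Ld θ ^ 2 = 3125/1728 / θ^5 := by
  have hu : (θ ^ (-(5:ℝ)/2))^2 = (θ^5)⁻¹ := by
    rw [← Real.rpow_natCast, ← Real.rpow_mul hθ.le, ← Real.rpow_natCast θ 5,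
      ← Real.rpow_neg hθ.le]
    norm_num
  rw [Ld, mul_pow, mul_pow, Real.sq_sqrt (by norm_num), hu]
  ring

lemma Ld_lt_L12 (hα : 0 < α) (hθ : 0 < θ) (hαθ : 25/16 ≤ α * θ^2) : Ld θ < L12 α θ := by
  refine lt_of_pow_lt_pow_left₀ 2 (L12_pos hα hθ).le ?_
  have hcube : (25/16 : ℝ)^3 ≤ (α * θ^2)^3 := pow_le_pow_left₀ (by norm_num) hαθ 3
  calc Ld θ ^ 2 = 3125/1728 / θ^5 := Ld_sq hθ
    _ < 2 * (25/16)^3 / θ^5 := by gcongr; norm_num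
    _ ≤ 2 * (α * θ^2)^3 / θ^5 := by gcongr
    _ = 2*α^3*θ := by field_simp
    _ ≤ L12 α θ ^ 2 := two_mul_cube_mul_le_L12_sq hα.le hθ.le

end L12

section Critical

variable {θ L X : ℝ}

lemma rpow_neg_three_halves_sq {t : ℝ} (ht : 0 ≤ t) : (t ^ (-(3:ℝ)/2))^2 = (t^3)⁻¹ := by
  rw [← Real.rpow_natCast, ← Real.rpow_mul ht, ← Real.rpow_natCast t 3, ← Real.rpow_neg ht]
  norm_num

lemma hasDerivAt_f (hX0 : X ≠ 0) (hXθ : X < θ) :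
    HasDerivAt (f θ L) ((1/2) * (θ - X) ^ (-(3:ℝ)/2) - 2 * L * X) X := by
  have hf : (fun Y => (θ - Y) ^ (-(1:ℝ)/2) - L * Y^2) =ᶠ[nhds X] f θ L := by
    filter_upwards [compl_singleton_mem_nhds hX0] with Y hY
    simp [f, show Y ≠ 0 from hY]
  have h := (((hasDerivAt_id' X).const_sub θ).rpow_const (p := -(1:ℝ)/2)
    (Or.inl (sub_pos.2 hXθ).ne')).sub ((hasDerivAt_pow 2 X).const_mul L)
  refine (h.congr_deriv ?_).congr_of_eventuallyEq hf.symm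
  norm_num
  ring

lemma critical_eq_iff (hXθ : X < θ) (hLX : 0 ≤ L * X) :
    (1/2) * (θ - X) ^ (-(3:ℝ)/2) = 2 * L * X ↔ 16 * L^2 * X^2 * (θ - X)^3 = 1 := by
  have ht : 0 < θ - X := sub_pos.2 hXθ
  rw [← sq_eq_sq₀ (by positivity) (by linarith), mul_pow, rpow_neg_three_halves_sq ht.le]
  constructor <;> intro h
  · field_simp at h
    linarith
  · field_simp
    linarith

lemma strictAntiOn_sq_mul_sub_cube :
    StrictAntiOn (fun t : ℝ => t^2 * (θ - t)^3) (Icc (2*θ/5) θ) := by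
  apply strictAntiOn_of_deriv_neg (convex_Icc _ _) (by fun_prop)
  intro x hx
  rw [interior_Icc] at hx
  have hD : HasDerivAt (fun t : ℝ => t^2 * (θ - t)^3)
      (x * (θ - x)^2 * (2*θ - 5*x)) x := by
    have h := (hasDerivAt_pow 2 x).mul ((hasDerivAt_pow 3 (θ - x)).comp x
      ((hasDerivAt_id' x).const_sub θ))
    refine h.congr_deriv ?_
    simp only [Function.comp_apply]
    push_cast
    ring
  rw [hD.deriv]
  have hx0 : 0 < x := lt_of_le_of_lt (by linarith [hx.1, hx.2]) hx.1
  exact mul_neg_of_pos_of_neg (by nlinarith [sq_pos_of_pos (sub_pos.2 hx.2)])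
    (by linarith [hx.1])

lemma eq_of_critical_eq {Y : ℝ} (hL : 0 ≤ L) (hX : X ∈ Ioo (2*θ/5) θ) (hY : Y ∈ Ioo (2*θ/5) θ)
    (hXc : (1/2) * (θ - X) ^ (-(3:ℝ)/2) = 2 * L * X)
    (hYc : (1/2) * (θ - Y) ^ (-(3:ℝ)/2) = 2 * L * Y) : X = Y := by
  have hθ : 0 < θ := by linarith [hX.1, hX.2]
  have hX0 : 0 ≤ X := by linarith [hX.1]
  have hY0 : 0 ≤ Y := by linarith [hY.1]
  rw [critical_eq_iff hX.2 (mul_nonneg hL hX0)] at hXc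
  rw [critical_eq_iff hY.2 (mul_nonneg hL hY0)] at hYc
  have hL0 : L ≠ 0 := by rintro rfl; simp at hXc
  refine strictAntiOn_sq_mul_sub_cube.injOn (Ioo_subset_Icc_self hX) (Ioo_subset_Icc_self hY) ?_
  apply mul_left_cancel₀ (show (16 * L^2 : ℝ) ≠ 0 by positivity)
  linear_combination hXc - hYc

end Critical

/-- For `θ ≥ θ*` and `L = L_12(θ)`: `L > L_d(θ)`, the number `θ̃ = θ - α²/L²`
satisfies `2θ/5 < θ̃ < θ` and `f'(θ̃) = 0`, hence `X_m(θ, L) = θ̃` (it satisfies the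
critical-point equation and is the unique critical point in `(2θ/5, θ)`). -/
theorem stmt_9 (α θ L : ℝ) (hα : 0 < α) (hθ : θstar α ≤ θ) (hL : L = L12 α θ) :
    Ld θ < L ∧
    2*θ/5 < θ - α^2/L^2 ∧ θ - α^2/L^2 < θ ∧
    deriv (f θ L) (θ - α^2/L^2) = 0 ∧
    (1/2) * (θ - (θ - α^2/L^2)) ^ (-(3:ℝ)/2) = 2 * L * (θ - α^2/L^2) ∧
    (∀ X ∈ Ioo (2*θ/5) θ, (1/2) * (θ - X) ^ (-(3:ℝ)/2) = 2 * L * X →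
      X = θ - α^2/L^2) := by
  obtain ⟨hθpos, hαθ⟩ := pos_and_le_mul_sq_of_θstar_le hα hθ
  have hLpos : 0 < L := hL ▸ L12_pos hα hθpos
  have hL2 : L^2 = 4*α^3 * (θ - α^2/L^2) := hL ▸ L12_sq_eq hα hθpos (by linarith)
  have hθ' : θ - α^2/L^2 = L^2 / (4*α^3) := by
    rw [eq_div_iff (by positivity)]
    linarith
  have hhalf : θ/2 ≤ θ - α^2/L^2 := by
    rw [hθ', le_div_iff₀ (by positivity)]
    linarith [hL ▸ two_mul_cube_mul_le_L12_sq hα.le hθpos.le]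
  have hlower : 2*θ/5 < θ - α^2/L^2 := by linarith
  have hupper : θ - α^2/L^2 < θ := sub_lt_self θ (by positivity)
  have hcrit : (1/2) * (θ - (θ - α^2/L^2)) ^ (-(3:ℝ)/2) = 2 * L * (θ - α^2/L^2) := by
    rw [critical_eq_iff hupper (mul_nonneg hLpos.le (by linarith)), sub_sub_cancel, hθ']
    field_simp
    ring
  refine ⟨hL ▸ Ld_lt_L12 hα hθpos hαθ, hlower, hupper, ?_, hcrit,
    fun X hX hXc => eq_of_critical_eq hLpos.le hX ⟨hlower, hupper⟩ hXc hcrit⟩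
  rw [(hasDerivAt_f (by linarith) hupper).deriv, hcrit, sub_self]
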